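/- The algebra B = B_q(s,t,ϕ) admits a ℤ-grading {B_n} in which C_s, C_t, K^{±1} are homogeneous of degree 0, F is homogeneous of degree 1, and E is homogeneous of degree −1; moreover B_0 has basis {K^h C_s^i C_t^j : h ∈ ℤ, i,j ∈ ℕ}, B_n (n ≥ 1) has basis {F^n K^h C_s^i C_t^j}, and B_{−n} (n ≥ 1) has basis {E^n K^h C_s^i C_t^j}. -/

import Mathlib

/-!
Let `B_n` be the span of the monomials `F^n K^h C_s^i C_t^j` (with `E^{-n}` for `F^n` when
`n < 0`). Left multiplication by `C_s`, `C_t`, `K^{±1}` maps each `B_n` into itself, because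
`K F^n = q^{-2n} F^n K`; left multiplication by `F` maps `B_n` into `B_{n+1}`, since for `n < 0`
one writes `F E^{-n} = (FE) E^{-n-1}` and `FE` is a Laurent polynomial in `K` with coefficients
in `C_s`, `C_t`; symmetrically `E B_n ⊆ B_{n-1}`. As `1 ∈ B_0`, the `B_n` span the algebra and
multiply as a grading. The monomials are linearly independent because `B_q(s,t,φ)` acts on the
vector space with basis `(n, h, i, j) ∈ ℤ × ℤ × ℕ × ℕ` by the formulas that the normal-ordering
rules dictate, and the monomial `F^n K^h C_s^i C_t^j` sends `(0, 0, 0, 0)` to `(n, h, i, j)`.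
-/

open LaurentPolynomial

noncomputable section

/-- The Laurent polynomial `ψ(c·λ)`. -/
noncomputable def lscale {F : Type*} [Field F] (c : F) (ψ : LaurentPolynomial F) :
    LaurentPolynomial F :=
  Finsupp.sum ψ.coeff fun i a => (a * c ^ i) • (T i : LaurentPolynomial F)

/-- The map `ψ ↦ ψ_{s,t}` of Definition 2.4:
`ψ_{s,t}(λ) = ψ(q⁻¹λ) − (q^{−2s}+q^{−2t})ψ(qλ) + q^{−2s−2t}ψ(q³λ)`. -/
noncomputable def adu {F : Type*} [Field F] (q : F) (s t : ℤ) (ψ : LaurentPolynomial F) :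
    LaurentPolynomial F :=
  lscale q⁻¹ ψ - (q ^ (-2*s) + q ^ (-2*t)) • lscale q ψ + q ^ (-2*s-2*t) • lscale (q^3) ψ

/-- `F[λ,λ⁻¹]_{s,t}`: the span of the monomials `λ^i`, `i ∉ {s,t}`. -/
noncomputable def lstSpan (F : Type*) [Field F] (s t : ℤ) :
    Submodule F (LaurentPolynomial F) :=
  Submodule.span F {ψ : LaurentPolynomial F | ∃ i : ℤ, i ≠ s ∧ i ≠ t ∧ ψ = T i}

/-- `x^i` for `i : ℤ`, interpreting negative powers via a designated inverse `y`. -/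
def zpow2 {B : Type*} [Monoid B] (x y : B) (i : ℤ) : B :=
  if 0 ≤ i then x ^ i.toNat else y ^ (-i).toNat

/-- Evaluation `ψ(c·x)` of a Laurent polynomial `ψ`, where `y` plays the role of `x⁻¹`. -/
noncomputable def leval {F : Type*} [Field F] {B : Type*} [Ring B] [Algebra F B]
    (ψ : LaurentPolynomial F) (c : F) (x y : B) : B :=
  Finsupp.sum ψ.coeff fun i a => (a * c ^ i) • zpow2 x y i

inductive BGen | cs | ct | e | f | k | kinv
deriving DecidableEq

open FreeAlgebra in
/-- Defining relations for `B_q(s,t,φ)`. -/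
inductive BRel {F : Type*} [Field F] (q : F) (s t : ℤ) (φ : LaurentPolynomial F) :
    FreeAlgebra F BGen → FreeAlgebra F BGen → Prop
  | csCentral (x) : BRel q s t φ (ι F BGen.cs * x) (x * ι F BGen.cs)
  | ctCentral (x) : BRel q s t φ (ι F BGen.ct * x) (x * ι F BGen.ct)
  | kkinv : BRel q s t φ (ι F BGen.k * ι F BGen.kinv) 1
  | kinvk : BRel q s t φ (ι F BGen.kinv * ι F BGen.k) 1
  | ke : BRel q s t φ (ι F BGen.k * ι F BGen.e) (q ^ 2 • (ι F BGen.e * ι F BGen.k))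
  | kf : BRel q s t φ (ι F BGen.k * ι F BGen.f) ((q ^ 2)⁻¹ • (ι F BGen.f * ι F BGen.k))
  | fe : BRel q s t φ (ι F BGen.f * ι F BGen.e)
      (q ^ s • (ι F BGen.cs * zpow2 (ι F BGen.k) (ι F BGen.kinv) s)
        + q ^ t • (ι F BGen.ct * zpow2 (ι F BGen.k) (ι F BGen.kinv) t)
        + leval φ q (ι F BGen.k) (ι F BGen.kinv))
  | ef : BRel q s t φ (ι F BGen.e * ι F BGen.f)
      (q ^ (-s) • (ι F BGen.cs * zpow2 (ι F BGen.k) (ι F BGen.kinv) s)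
        + q ^ (-t) • (ι F BGen.ct * zpow2 (ι F BGen.k) (ι F BGen.kinv) t)
        + leval φ q⁻¹ (ι F BGen.k) (ι F BGen.kinv))

/-- The algebra `B_q(s,t,φ)`. -/
def BAlg {F : Type*} [Field F] (q : F) (s t : ℤ) (φ : LaurentPolynomial F) : Type _ :=
  RingQuot (BRel q s t φ)

noncomputable instance {F : Type*} [Field F] (q : F) (s t : ℤ) (φ : LaurentPolynomial F) :
    Ring (BAlg q s t φ) := inferInstanceAs (Ring (RingQuot _))

noncomputable instance {F : Type*} [Field F] (q : F) (s t : ℤ) (φ : LaurentPolynomial F) :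
    Algebra F (BAlg q s t φ) := inferInstanceAs (Algebra F (RingQuot _))

/-- The images of the generators in `B_q(s,t,φ)`. -/
noncomputable def bgen {F : Type*} [Field F] (q : F) (s t : ℤ) (φ : LaurentPolynomial F)
    (g : BGen) : BAlg q s t φ :=
  RingQuot.mkAlgHom F (BRel q s t φ) (FreeAlgebra.ι F g)

section Zpow2

variable {M : Type*} [Monoid M]

lemma zpow2_of_nonneg (x y : M) {i : ℤ} (hi : 0 ≤ i) : zpow2 x y i = x ^ i.toNat := if_pos hi

lemma zpow2_of_neg (x y : M) {i : ℤ} (hi : i < 0) : zpow2 x y i = y ^ (-i).toNat :=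
  if_neg (by omega)

lemma zpow2_add_one {x y : M} {i : ℤ} (hi : 0 ≤ i) : zpow2 x y (i + 1) = x * zpow2 x y i := by
  rw [zpow2, zpow2, if_pos hi, if_pos (by omega), ← pow_succ',
    show (i + 1).toNat = i.toNat + 1 by omega]

lemma zpow2_sub_one {x y : M} {i : ℤ} (hi : i ≤ 0) : zpow2 x y (i - 1) = y * zpow2 x y i := by
  rw [zpow2, zpow2, if_neg (by omega)]
  split_ifs with h
  · rw [show i = 0 by omega]; simp
  · rw [← pow_succ', show (-(i - 1)).toNat = (-i).toNat + 1 by omega]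

lemma map_zpow2 {N G : Type*} [Monoid N] [FunLike G M N] [MonoidHomClass G M N] (f : G)
    (x y : M) (i : ℤ) : f (zpow2 x y i) = zpow2 (f x) (f y) i := by
  unfold zpow2
  split_ifs <;> exact map_pow f _ _

lemma zpow2_eq_of_monoidHom (P : Multiplicative ℤ →* M) (i : ℤ) :
    zpow2 (P (.ofAdd 1)) (P (.ofAdd (-1))) i = P (.ofAdd i) := by
  unfold zpow2
  split_ifs with hi
  · rw [← map_pow, ← ofAdd_nsmul, nsmul_one, Int.toNat_of_nonneg hi]
  · rw [← map_pow, ← ofAdd_nsmul, smul_neg, nsmul_one, Int.toNat_of_nonneg (by omega), neg_neg]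

lemma Units.zpow2_eq_val_zpow (u : Mˣ) (i : ℤ) : zpow2 (u : M) ↑u⁻¹ i = ↑(u ^ i) := by
  simpa using zpow2_eq_of_monoidHom ((Units.coeHom M).comp (zpowersHom Mˣ u)) i

end Zpow2

section QCommute

variable {𝕜 A : Type*} [Field 𝕜] [Ring A] [Algebra 𝕜 A]

lemma mul_pow_eq_smul_of_mul_eq_smul {x y : A} {c : 𝕜} (h : y * x = c • (x * y)) (m : ℕ) :
    y * x ^ m = c ^ m • (x ^ m * y) := by
  induction m with
  | zero => simp
  | succ m ih =>
    rw [pow_succ, ← mul_assoc, ih, smul_mul_assoc, mul_assoc, h, mul_smul_comm, smul_smul,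
      ← mul_assoc, pow_succ]

lemma Units.val_zpow_mul_eq_smul {u : Aˣ} {x : A} {c : 𝕜} (hc : c ≠ 0)
    (h : ↑u * x = c • (x * ↑u)) (a : ℤ) : ↑(u ^ a) * x = c ^ a • (x * ↑(u ^ a)) := by
  have hinv : ↑u⁻¹ * x = c⁻¹ • (x * ↑u⁻¹) := by
    calc ↑u⁻¹ * x = c⁻¹ • (↑u⁻¹ * (c • (x * ↑u)) * ↑u⁻¹) := by
          rw [mul_smul_comm, smul_mul_assoc, inv_smul_smul₀ hc, mul_assoc, mul_assoc,
            Units.mul_inv, mul_one]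
      _ = c⁻¹ • (x * ↑u⁻¹) := by rw [← h, ← mul_assoc, Units.inv_mul, one_mul]
  induction a using Int.induction_on with
  | zero => simp
  | succ a ih =>
    rw [zpow_add_one, Units.val_mul, mul_assoc, h, mul_smul_comm, ← mul_assoc, ih,
      smul_mul_assoc, smul_smul, zpow_add_one₀ hc, mul_assoc, mul_comm c]
  | pred a ih =>
    rw [zpow_sub_one, Units.val_mul, mul_assoc, hinv, mul_smul_comm, ← mul_assoc, ih,
      smul_mul_assoc, smul_smul, zpow_sub_one₀ hc, mul_assoc, mul_comm c⁻¹]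

end QCommute

lemma map_leval {𝕜 A B : Type*} [Field 𝕜] [Ring A] [Algebra 𝕜 A] [Ring B] [Algebra 𝕜 B]
    (f : A →ₐ[𝕜] B) (ψ : LaurentPolynomial 𝕜) (c : 𝕜) (x y : A) :
    f (leval ψ c x y) = leval ψ c (f x) (f y) := by
  simp only [_root_.leval, map_finsuppSum, map_smul, map_zpow2]

section LeftStabilizer

variable {𝕜 A : Type*} [Field 𝕜] [Ring A] [Algebra 𝕜 A]

def Submodule.leftStabilizer (V : Submodule 𝕜 A) : Subalgebra 𝕜 A where
  carrier := {x | ∀ y ∈ V, x * y ∈ V}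
  mul_mem' hx hx' y hy := by rw [mul_assoc]; exact hx _ (hx' y hy)
  add_mem' hx hx' y hy := by rw [add_mul]; exact V.add_mem (hx y hy) (hx' y hy)
  algebraMap_mem' r y hy := by
    rw [Algebra.algebraMap_eq_smul_one, smul_mul_assoc, one_mul]; exact V.smul_mem r hy

lemma Submodule.mul_mem_of_mem_span {S : Set A} {V : Submodule 𝕜 A} {x : A}
    (h : ∀ y ∈ S, x * y ∈ V) {y : A} (hy : y ∈ Submodule.span 𝕜 S) : x * y ∈ V :=
  (Submodule.span_le (p := V.comap (LinearMap.mulLeft 𝕜 x))).mpr h hy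

end LeftStabilizer

section Relations

variable {𝕜 A B : Type*} [Field 𝕜] [Ring A] [Algebra 𝕜 A] [Ring B] [Algebra 𝕜 B]

/-- In `B_q(s,t,φ)` one has `FE = theta q` and `EF = theta q⁻¹`. -/
def theta (s t : ℤ) (φ : LaurentPolynomial 𝕜) (c : 𝕜) (cs ct k kinv : A) : A :=
  c ^ s • (cs * zpow2 k kinv s) + c ^ t • (ct * zpow2 k kinv t) + leval φ c k kinv

lemma theta_mem {S : Subalgebra 𝕜 A} (s t : ℤ) (φ : LaurentPolynomial 𝕜) (c : 𝕜)
    {cs ct k kinv : A} (hcs : cs ∈ S) (hct : ct ∈ S) (hk : k ∈ S) (hkinv : kinv ∈ S) :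
    theta s t φ c cs ct k kinv ∈ S := by
  have hpow : ∀ i, zpow2 k kinv i ∈ S := fun i => by
    unfold zpow2; split_ifs <;> exact pow_mem ‹_› _
  exact add_mem (add_mem (S.smul_mem (mul_mem hcs (hpow s)) _)
    (S.smul_mem (mul_mem hct (hpow t)) _))
    (sum_mem fun a _ => S.smul_mem (hpow a) _)

/-- The relations `BRel` for images `g` of the generators, except that `C_s`, `C_t` need only
commute with the generators. -/
structure BRelHolds (q : 𝕜) (s t : ℤ) (φ : LaurentPolynomial 𝕜) (g : BGen → A) : Prop where
  cs_comm : ∀ b, Commute (g .cs) (g b)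
  ct_comm : ∀ b, Commute (g .ct) (g b)
  k_mul_kinv : g .k * g .kinv = 1
  kinv_mul_k : g .kinv * g .k = 1
  k_mul_e : g .k * g .e = q ^ 2 • (g .e * g .k)
  k_mul_f : g .k * g .f = (q ^ 2)⁻¹ • (g .f * g .k)
  f_mul_e : g .f * g .e = theta s t φ q (g .cs) (g .ct) (g .k) (g .kinv)
  e_mul_f : g .e * g .f = theta s t φ q⁻¹ (g .cs) (g .ct) (g .k) (g .kinv)

lemma commute_freeAlgebraLift {X : Type*} {g : X → A} {a : A} (h : ∀ b, Commute a (g b))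
    (x : FreeAlgebra 𝕜 X) : Commute a (FreeAlgebra.lift 𝕜 g x) := by
  induction x with
  | grade0 r => rw [AlgHom.commutes]; exact Algebra.commute_algebraMap_right r a
  | grade1 b => rw [FreeAlgebra.lift_ι_apply]; exact h b
  | mul x y hx hy => rw [map_mul]; exact hx.mul_right hy
  | add x y hx hy => rw [map_add]; exact hx.add_right hy

variable {q : 𝕜} {s t : ℤ} {φ : LaurentPolynomial 𝕜} {g : BGen → A}

lemma BRelHolds.freeAlgebraLift_eq (h : BRelHolds q s t φ g) ⦃x y : FreeAlgebra 𝕜 BGen⦄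
    (r : BRel q s t φ x y) : FreeAlgebra.lift 𝕜 g x = FreeAlgebra.lift 𝕜 g y := by
  cases r with
  | csCentral x => simpa using (commute_freeAlgebraLift h.cs_comm x).eq
  | ctCentral x => simpa using (commute_freeAlgebraLift h.ct_comm x).eq
  | kkinv => simpa using h.k_mul_kinv
  | kinvk => simpa using h.kinv_mul_k
  | ke => simpa using h.k_mul_e
  | kf => simpa using h.k_mul_f
  | fe => simpa [theta, map_zpow2, map_leval] using h.f_mul_e
  | ef => simpa [theta, map_zpow2, map_leval] using h.e_mul_f

def BRelHolds.lift (h : BRelHolds q s t φ g) : BAlg q s t φ →ₐ[𝕜] A :=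
  RingQuot.liftAlgHom 𝕜 ⟨FreeAlgebra.lift 𝕜 g, h.freeAlgebraLift_eq⟩

@[simp] lemma BRelHolds.lift_bgen (h : BRelHolds q s t φ g) (b : BGen) :
    h.lift (bgen q s t φ b) = g b :=
  (RingQuot.liftAlgHom_mkAlgHom_apply 𝕜 _ h.freeAlgebraLift_eq _).trans
    (FreeAlgebra.lift_ι_apply _ _)

end Relations

namespace BAlg

variable {𝕜 : Type*} [Field 𝕜] {q : 𝕜} {s t : ℤ} {φ : LaurentPolynomial 𝕜}

local notation "𝐂ₛ" => bgen q s t φ BGen.cs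
local notation "𝐂ₜ" => bgen q s t φ BGen.ct
local notation "𝐊" => bgen q s t φ BGen.k
local notation "𝐊⁻¹" => bgen q s t φ BGen.kinv
local notation "𝐄" => bgen q s t φ BGen.e
local notation "𝐅" => bgen q s t φ BGen.f
local notation "𝐊^[" a "]" => zpow2 (bgen q s t φ BGen.k) (bgen q s t φ BGen.kinv) a
local notation "𝐅^[" n "]" => zpow2 (bgen q s t φ BGen.f) (bgen q s t φ BGen.e) n

section Generators

variable (q s t φ)

def mk : FreeAlgebra 𝕜 BGen →ₐ[𝕜] BAlg q s t φ := RingQuot.mkAlgHom 𝕜 (BRel q s t φ)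

@[simp] lemma mk_ι (b : BGen) : mk q s t φ (FreeAlgebra.ι 𝕜 b) = bgen q s t φ b := rfl

lemma mk_rel {x y : FreeAlgebra 𝕜 BGen} (r : BRel q s t φ x y) : mk q s t φ x = mk q s t φ y :=
  RingQuot.mkAlgHom_rel 𝕜 r

lemma mk_surjective : Function.Surjective (mk q s t φ) := RingQuot.mkAlgHom_surjective 𝕜 _

lemma mem_of_forall_bgen_mem {S : Subalgebra 𝕜 (BAlg q s t φ)} (h : ∀ b, bgen q s t φ b ∈ S)
    (x : BAlg q s t φ) : x ∈ S := by
  obtain ⟨y, rfl⟩ := mk_surjective q s t φ x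
  induction y with
  | grade0 r => rw [AlgHom.commutes]; exact S.algebraMap_mem r
  | grade1 b => exact h b
  | mul y y' hy hy' => rw [map_mul]; exact mul_mem hy hy'
  | add y y' hy hy' => rw [map_add]; exact add_mem hy hy'

lemma commute_cs (x : BAlg q s t φ) : Commute 𝐂ₛ x := by
  obtain ⟨y, rfl⟩ := mk_surjective q s t φ x
  simpa [Commute, SemiconjBy] using mk_rel q s t φ (BRel.csCentral y)

lemma commute_ct (x : BAlg q s t φ) : Commute 𝐂ₜ x := by
  obtain ⟨y, rfl⟩ := mk_surjective q s t φ x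
  simpa [Commute, SemiconjBy] using mk_rel q s t φ (BRel.ctCentral y)

lemma bgen_relHolds : BRelHolds q s t φ (bgen q s t φ) where
  cs_comm b := commute_cs q s t φ _
  ct_comm b := commute_ct q s t φ _
  k_mul_kinv := by simpa using mk_rel q s t φ .kkinv
  kinv_mul_k := by simpa using mk_rel q s t φ .kinvk
  k_mul_e := by simpa using mk_rel q s t φ .ke
  k_mul_f := by simpa using mk_rel q s t φ .kf
  f_mul_e := by simpa [theta, map_zpow2, map_leval] using mk_rel q s t φ .fe
  e_mul_f := by simpa [theta, map_zpow2, map_leval] using mk_rel q s t φ .ef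

def unitK : (BAlg q s t φ)ˣ :=
  ⟨𝐊, 𝐊⁻¹, (bgen_relHolds q s t φ).k_mul_kinv, (bgen_relHolds q s t φ).kinv_mul_k⟩

lemma zpowK_eq_unitK_zpow (a : ℤ) : 𝐊^[a] = ↑(unitK q s t φ ^ a) :=
  Units.zpow2_eq_val_zpow (unitK q s t φ) a

lemma zpowK_mul_zpowK (a b : ℤ) : 𝐊^[a] * 𝐊^[b] = 𝐊^[a + b] := by
  rw [zpowK_eq_unitK_zpow, zpowK_eq_unitK_zpow, zpowK_eq_unitK_zpow, zpow_add, Units.val_mul]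

variable {q} in
lemma zpowK_mul_zpowF (hq0 : q ≠ 0) (a n : ℤ) :
    𝐊^[a] * 𝐅^[n] = q ^ (-2 * a * n) • (𝐅^[n] * 𝐊^[a]) := by
  have hE : 𝐊^[a] * 𝐄 = ((q ^ 2) ^ a) • (𝐄 * 𝐊^[a]) := by
    rw [zpowK_eq_unitK_zpow]
    exact Units.val_zpow_mul_eq_smul (pow_ne_zero 2 hq0) (bgen_relHolds q s t φ).k_mul_e a
  have hF : 𝐊^[a] * 𝐅 = ((q ^ 2)⁻¹ ^ a) • (𝐅 * 𝐊^[a]) := by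
    rw [zpowK_eq_unitK_zpow]
    exact Units.val_zpow_mul_eq_smul (inv_ne_zero (pow_ne_zero 2 hq0))
      (bgen_relHolds q s t φ).k_mul_f a
  rcases le_or_gt 0 n with hn | hn
  · rw [zpow2_of_nonneg _ _ hn, mul_pow_eq_smul_of_mul_eq_smul hF, ← zpow_natCast,
      Int.toNat_of_nonneg hn]
    congr 1
    rw [← zpow_natCast, ← zpow_neg, ← zpow_mul, ← zpow_mul]
    ring_nf
  · rw [zpow2_of_neg _ _ hn, mul_pow_eq_smul_of_mul_eq_smul hE, ← zpow_natCast,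
      Int.toNat_of_nonneg (by omega)]
    congr 1
    rw [← zpow_natCast, ← zpow_mul, ← zpow_mul]
    ring_nf

def mono (n : ℤ) (p : ℤ × ℕ × ℕ) : BAlg q s t φ := 𝐅^[n] * 𝐊^[p.1] * 𝐂ₛ ^ p.2.1 * 𝐂ₜ ^ p.2.2

def grade (n : ℤ) : Submodule 𝕜 (BAlg q s t φ) := Submodule.span 𝕜 (Set.range (mono q s t φ n))

lemma mono_mem_grade (n : ℤ) (p : ℤ × ℕ × ℕ) : mono q s t φ n p ∈ grade q s t φ n :=
  Submodule.subset_span ⟨p, rfl⟩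

lemma cs_mul_mono (n h : ℤ) (i j : ℕ) :
    𝐂ₛ * mono q s t φ n (h, i, j) = mono q s t φ n (h, i + 1, j) := by
  simp only [mono]
  rw [(commute_cs q s t φ _).eq, mul_assoc _ (𝐂ₜ ^ j), ← (commute_cs q s t φ _).eq, ← mul_assoc,
    pow_succ, mul_assoc _ (𝐂ₛ ^ i)]

lemma ct_mul_mono (n h : ℤ) (i j : ℕ) :
    𝐂ₜ * mono q s t φ n (h, i, j) = mono q s t φ n (h, i, j + 1) := by
  rw [(commute_ct q s t φ _).eq, mono, mono, pow_succ, mul_assoc]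

variable {q} in
lemma zpowK_mul_mono (hq0 : q ≠ 0) (a n h : ℤ) (i j : ℕ) :
    𝐊^[a] * mono q s t φ n (h, i, j) = q ^ (-2 * a * n) • mono q s t φ n (a + h, i, j) := by
  simp only [mono, ← mul_assoc, zpowK_mul_zpowF s t φ hq0, smul_mul_assoc]
  rw [mul_assoc (𝐅^[n]), zpowK_mul_zpowK]

end Generators

section Grading

variable (s t φ)

variable (q) in
lemma cs_mem_leftStabilizer (n : ℤ) : 𝐂ₛ ∈ (grade q s t φ n).leftStabilizer :=
  fun _ => Submodule.mul_mem_of_mem_span <| Set.forall_mem_range.mpr fun ⟨h, i, j⟩ => by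
    rw [cs_mul_mono]; exact mono_mem_grade q s t φ n _

variable (q) in
lemma ct_mem_leftStabilizer (n : ℤ) : 𝐂ₜ ∈ (grade q s t φ n).leftStabilizer :=
  fun _ => Submodule.mul_mem_of_mem_span <| Set.forall_mem_range.mpr fun ⟨h, i, j⟩ => by
    rw [ct_mul_mono]; exact mono_mem_grade q s t φ n _

lemma zpowK_mem_leftStabilizer (hq0 : q ≠ 0) (a n : ℤ) :
    𝐊^[a] ∈ (grade q s t φ n).leftStabilizer :=
  fun _ => Submodule.mul_mem_of_mem_span <| Set.forall_mem_range.mpr fun ⟨h, i, j⟩ => by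
    rw [zpowK_mul_mono s t φ hq0]; exact Submodule.smul_mem _ _ (mono_mem_grade q s t φ n _)

lemma k_mem_leftStabilizer (hq0 : q ≠ 0) (n : ℤ) : 𝐊 ∈ (grade q s t φ n).leftStabilizer := by
  simpa [zpow2] using zpowK_mem_leftStabilizer s t φ hq0 1 n

lemma kinv_mem_leftStabilizer (hq0 : q ≠ 0) (n : ℤ) : 𝐊⁻¹ ∈ (grade q s t φ n).leftStabilizer := by
  simpa [zpow2] using zpowK_mem_leftStabilizer s t φ hq0 (-1) n

lemma theta_mem_leftStabilizer (hq0 : q ≠ 0) (c : 𝕜) (n : ℤ) :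
    theta s t φ c 𝐂ₛ 𝐂ₜ 𝐊 𝐊⁻¹ ∈ (grade q s t φ n).leftStabilizer :=
  theta_mem s t φ c (cs_mem_leftStabilizer q s t φ n) (ct_mem_leftStabilizer q s t φ n)
    (k_mem_leftStabilizer s t φ hq0 n) (kinv_mem_leftStabilizer s t φ hq0 n)

lemma f_mul_mem_grade (hq0 : q ≠ 0) {n : ℤ} {y : BAlg q s t φ} (hy : y ∈ grade q s t φ n) :
    𝐅 * y ∈ grade q s t φ (n + 1) := by
  refine Submodule.mul_mem_of_mem_span (Set.forall_mem_range.mpr fun p => ?_) hy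
  rcases le_or_gt 0 n with hn | hn
  · have hshift : 𝐅 * mono q s t φ n p = mono q s t φ (n + 1) p := by
      simp only [mono, ← mul_assoc, zpow2_add_one hn]
    rw [hshift]
    exact mono_mem_grade q s t φ _ p
  · have hsplit : mono q s t φ n p = 𝐄 * mono q s t φ (n + 1) p := by
      have h := zpow2_sub_one (x := 𝐅) (y := 𝐄) (by omega : n + 1 ≤ 0)
      rw [add_sub_cancel_right] at h
      simp only [mono, h, mul_assoc]
    rw [hsplit, ← mul_assoc, (bgen_relHolds q s t φ).f_mul_e]
    exact theta_mem_leftStabilizer s t φ hq0 q (n + 1) _ (mono_mem_grade q s t φ _ p)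

lemma e_mul_mem_grade (hq0 : q ≠ 0) {n : ℤ} {y : BAlg q s t φ} (hy : y ∈ grade q s t φ n) :
    𝐄 * y ∈ grade q s t φ (n - 1) := by
  refine Submodule.mul_mem_of_mem_span (Set.forall_mem_range.mpr fun p => ?_) hy
  rcases le_or_gt n 0 with hn | hn
  · have hshift : 𝐄 * mono q s t φ n p = mono q s t φ (n - 1) p := by
      simp only [mono, ← mul_assoc, zpow2_sub_one hn]
    rw [hshift]
    exact mono_mem_grade q s t φ _ p
  · have hsplit : mono q s t φ n p = 𝐅 * mono q s t φ (n - 1) p := by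
      have h := zpow2_add_one (x := 𝐅) (y := 𝐄) (by omega : 0 ≤ n - 1)
      rw [sub_add_cancel] at h
      simp only [mono, h, mul_assoc]
    rw [hsplit, ← mul_assoc, (bgen_relHolds q s t φ).e_mul_f]
    exact theta_mem_leftStabilizer s t φ hq0 q⁻¹ (n - 1) _ (mono_mem_grade q s t φ _ p)

lemma zpowF_mul_mem_grade (hq0 : q ≠ 0) (m : ℤ) {n : ℤ} {y : BAlg q s t φ}
    (hy : y ∈ grade q s t φ n) : 𝐅^[m] * y ∈ grade q s t φ (m + n) := by
  induction m using Int.induction_on with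
  | zero => simpa [zpow2] using hy
  | succ k ih =>
    rw [zpow2_add_one (by omega), mul_assoc, add_right_comm]
    exact f_mul_mem_grade s t φ hq0 ih
  | pred k ih =>
    rw [zpow2_sub_one (by omega), mul_assoc, sub_add_eq_add_sub]
    exact e_mul_mem_grade s t φ hq0 ih

lemma mul_mem_grade (hq0 : q ≠ 0) {m n : ℤ} {x y : BAlg q s t φ} (hx : x ∈ grade q s t φ m)
    (hy : y ∈ grade q s t φ n) : x * y ∈ grade q s t φ (m + n) := by
  induction hx using Submodule.span_induction with
  | mem x hx =>
    obtain ⟨⟨h, i, j⟩, rfl⟩ := hx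
    have hdeg0 : 𝐊^[h] * 𝐂ₛ ^ i * 𝐂ₜ ^ j ∈ (grade q s t φ n).leftStabilizer :=
      mul_mem (mul_mem (zpowK_mem_leftStabilizer s t φ hq0 h n)
        (pow_mem (cs_mem_leftStabilizer q s t φ n) i)) (pow_mem (ct_mem_leftStabilizer q s t φ n) j)
    have hsplit : mono q s t φ m (h, i, j) * y = 𝐅^[m] * ((𝐊^[h] * 𝐂ₛ ^ i * 𝐂ₜ ^ j) * y) := by
      simp only [mono, mul_assoc]
    rw [hsplit]
    exact zpowF_mul_mem_grade s t φ hq0 m (hdeg0 y hy)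
  | zero => rw [zero_mul]; exact zero_mem _
  | add x x' _ _ hx hx' => rw [add_mul]; exact add_mem hx hx'
  | smul c x _ hx => rw [smul_mul_assoc]; exact Submodule.smul_mem _ c hx

variable (q) in
lemma one_mem_grade_zero : (1 : BAlg q s t φ) ∈ grade q s t φ 0 := by
  simpa [mono, zpow2] using mono_mem_grade q s t φ 0 (0, 0, 0)

lemma iSup_grade_eq_top (hq0 : q ≠ 0) : ⨆ n, grade q s t φ n = ⊤ := by
  have hgen : ∀ b, bgen q s t φ b ∈ (⨆ n, grade q s t φ n).leftStabilizer := by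
    suffices h : ∀ b n, ∃ m, ∀ y ∈ grade q s t φ n, bgen q s t φ b * y ∈ grade q s t φ m by
      intro b y hy
      refine Submodule.iSup_induction _ (motive := (bgen q s t φ b * · ∈ _)) hy
        (fun n y hy => ?_) (by rw [mul_zero]; exact zero_mem _)
        (fun y y' hy hy' => by rw [mul_add]; exact add_mem hy hy')
      obtain ⟨m, hm⟩ := h b n
      exact Submodule.mem_iSup_of_mem m (hm y hy)
    intro b n
    cases b
    · exact ⟨n, cs_mem_leftStabilizer q s t φ n⟩
    · exact ⟨n, ct_mem_leftStabilizer q s t φ n⟩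
    · exact ⟨n - 1, fun _ => e_mul_mem_grade s t φ hq0⟩
    · exact ⟨n + 1, fun _ => f_mul_mem_grade s t φ hq0⟩
    · exact ⟨n, k_mem_leftStabilizer s t φ hq0 n⟩
    · exact ⟨n, kinv_mem_leftStabilizer s t φ hq0 n⟩
  refine eq_top_iff.mpr fun x _ => ?_
  simpa using mem_of_forall_bgen_mem q s t φ hgen x _
    (Submodule.mem_iSup_of_mem 0 (one_mem_grade_zero q s t φ))

end Grading

section Representation

variable (𝕜) in
/-- The basis vector `vec n h i j` below stands for the monomial `F^n K^h C_s^i C_t^j`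
(read `E^{-n}` for `F^n` when `n < 0`). -/
abbrev MonomialSpace : Type _ := ℤ × ℤ × ℕ × ℕ →₀ 𝕜

def vec (n h : ℤ) (i j : ℕ) : MonomialSpace 𝕜 := Finsupp.single (n, h, i, j) 1

def ofVec (v : ℤ → ℤ → ℕ → ℕ → MonomialSpace 𝕜) : Module.End 𝕜 (MonomialSpace 𝕜) :=
  Finsupp.linearCombination 𝕜 fun p => v p.1 p.2.1 p.2.2.1 p.2.2.2

@[simp] lemma ofVec_vec (v : ℤ → ℤ → ℕ → ℕ → MonomialSpace 𝕜) (n h : ℤ) (i j : ℕ) :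
    ofVec v (vec n h i j) = v n h i j := by
  simp [ofVec, vec]

lemma ext_vec {f g : Module.End 𝕜 (MonomialSpace 𝕜)}
    (hfg : ∀ n h i j, f (vec n h i j) = g (vec n h i j)) : f = g :=
  Finsupp.basisSingleOne.ext fun p => by simpa [vec] using hfg p.1 p.2.1 p.2.2.1 p.2.2.2

variable (𝕜) in
def opCs : Module.End 𝕜 (MonomialSpace 𝕜) := ofVec fun n h i j => vec n h (i + 1) j

variable (𝕜) in
def opCt : Module.End 𝕜 (MonomialSpace 𝕜) := ofVec fun n h i j => vec n h i (j + 1)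

@[simp] lemma opCs_vec (n h : ℤ) (i j : ℕ) : opCs 𝕜 (vec n h i j) = vec n h (i + 1) j :=
  ofVec_vec _ n h i j

@[simp] lemma opCt_vec (n h : ℤ) (i j : ℕ) : opCt 𝕜 (vec n h i j) = vec n h i (j + 1) :=
  ofVec_vec _ n h i j

variable (q) in
def opK (a : ℤ) : Module.End 𝕜 (MonomialSpace 𝕜) :=
  ofVec fun n h i j => q ^ (-2 * n * a) • vec n (h + a) i j

@[simp] lemma opK_vec (a n h : ℤ) (i j : ℕ) :
    opK q a (vec n h i j) = q ^ (-2 * n * a) • vec n (h + a) i j :=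
  ofVec_vec _ n h i j

lemma opK_zero : opK q 0 = 1 := ext_vec fun n h i j => by simp [opK]

lemma opK_add (hq0 : q ≠ 0) (a b : ℤ) : opK q (a + b) = opK q a * opK q b :=
  ext_vec fun n h i j => by
    simp only [Module.End.mul_apply, opK_vec, map_smul, smul_smul, ← zpow_add₀ hq0]
    congr 2 <;> ring

lemma zpow2_opK (hq0 : q ≠ 0) (a : ℤ) : zpow2 (opK q 1) (opK q (-1)) a = opK q a :=
  zpow2_eq_of_monoidHom
    { toFun := fun a => opK q a.toAdd, map_one' := opK_zero,
      map_mul' := fun a b => opK_add hq0 a.toAdd b.toAdd } a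

variable (q s t φ)

/-- `q^{se} C_s K^s + q^{te} C_t K^t + Σ_a φ_a q^{ae} K^a` applied to `vec n h i j`, without the
factor `q^{-2na}` that `K^a` contributes; as `e` does not depend on `n`, `F` and `E` shift `n`
inside it freely. -/
def twist (e n h : ℤ) (i j : ℕ) : MonomialSpace 𝕜 :=
  q ^ (s * e) • vec n (h + s) (i + 1) j + q ^ (t * e) • vec n (h + t) i (j + 1)
    + φ.coeff.sum fun a c => (c * q ^ (a * e)) • vec n (h + a) i j

/-- For `n < 0`, `F E^{-n} = (FE) E^{-n-1}`: the `K^a` in `FE` moves past `E^{-n-1}`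
at the cost `q^{-2a(n+1)}`, and `q^a q^{-2a(n+1)} = q^{a(-2n-1)}`. -/
def opF : Module.End 𝕜 (MonomialSpace 𝕜) :=
  ofVec fun n h i j =>
    if 0 ≤ n then vec (n + 1) h i j else twist q s t φ (-2 * n - 1) (n + 1) h i j

def opE : Module.End 𝕜 (MonomialSpace 𝕜) :=
  ofVec fun n h i j =>
    if n ≤ 0 then vec (n - 1) h i j else twist q s t φ (1 - 2 * n) (n - 1) h i j

lemma map_twist (L : Module.End 𝕜 (MonomialSpace 𝕜)) (e n h : ℤ) (i j : ℕ) :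
    L (twist q s t φ e n h i j) =
      q ^ (s * e) • L (vec n (h + s) (i + 1) j) + q ^ (t * e) • L (vec n (h + t) i (j + 1))
        + φ.coeff.sum fun a c => (c * q ^ (a * e)) • L (vec n (h + a) i j) := by
  simp [twist, map_finsuppSum]

lemma opCs_twist (e n h : ℤ) (i j : ℕ) :
    opCs 𝕜 (twist q s t φ e n h i j) = twist q s t φ e n h (i + 1) j := by
  rw [map_twist]; simp [twist]

lemma opCt_twist (e n h : ℤ) (i j : ℕ) :
    opCt 𝕜 (twist q s t φ e n h i j) = twist q s t φ e n h i (j + 1) := by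
  rw [map_twist]; simp [twist]

lemma opK_twist (a e n h : ℤ) (i j : ℕ) :
    opK q a (twist q s t φ e n h i j) = q ^ (-2 * n * a) • twist q s t φ e n (h + a) i j := by
  rw [map_twist]
  simp only [opK_vec, twist, smul_add, Finsupp.smul_sum, smul_smul]
  congr 2
  · rw [mul_comm, add_right_comm]
  · rw [mul_comm, add_right_comm]
  · funext b c
    rw [mul_comm (q ^ _), add_right_comm]

variable {s t φ} in
lemma opF_vec_of_nonneg {n : ℤ} (hn : 0 ≤ n) (h : ℤ) (i j : ℕ) :
    opF q s t φ (vec n h i j) = vec (n + 1) h i j := by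
  simp [opF, hn]

lemma opF_vec_of_neg {n : ℤ} (hn : n < 0) (h : ℤ) (i j : ℕ) :
    opF q s t φ (vec n h i j) = twist q s t φ (-2 * n - 1) (n + 1) h i j := by
  simp [opF, hn.not_ge]

variable {s t φ} in
lemma opE_vec_of_nonpos {n : ℤ} (hn : n ≤ 0) (h : ℤ) (i j : ℕ) :
    opE q s t φ (vec n h i j) = vec (n - 1) h i j := by
  simp [opE, hn]

lemma opE_vec_of_pos {n : ℤ} (hn : 0 < n) (h : ℤ) (i j : ℕ) :
    opE q s t φ (vec n h i j) = twist q s t φ (1 - 2 * n) (n - 1) h i j := by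
  simp [opE, hn.not_ge]

lemma opF_twist {n : ℤ} (hn : 0 ≤ n) (e h : ℤ) (i j : ℕ) :
    opF q s t φ (twist q s t φ e n h i j) = twist q s t φ e (n + 1) h i j := by
  rw [map_twist]; simp only [opF_vec_of_nonneg q hn, twist]

lemma opE_twist {n : ℤ} (hn : n ≤ 0) (e h : ℤ) (i j : ℕ) :
    opE q s t φ (twist q s t φ e n h i j) = twist q s t φ e (n - 1) h i j := by
  rw [map_twist]; simp only [opE_vec_of_nonpos q hn, twist]

lemma theta_vec (hq0 : q ≠ 0) (e n h : ℤ) (i j : ℕ) :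
    theta s t φ (q ^ (e + 2 * n)) (opCs 𝕜) (opCt 𝕜) (opK q 1) (opK q (-1)) (vec n h i j)
      = twist q s t φ e n h i j := by
  have hK : ∀ a, zpow2 (opK q 1) (opK q (-1)) a (vec n h i j) =
      q ^ (-2 * n * a) • vec n (h + a) i j := fun a => by rw [zpow2_opK hq0, opK_vec]
  have hc : ∀ a : ℤ, (q ^ (e + 2 * n)) ^ a * q ^ (-2 * n * a) = q ^ (a * e) := fun a => by
    rw [← zpow_mul, ← zpow_add₀ hq0]; ring_nf
  simp only [theta, _root_.leval, LinearMap.add_apply, LinearMap.smul_apply, Module.End.mul_apply,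
    LinearMap.finsupp_sum_apply, hK, map_smul, opCs_vec, opCt_vec, smul_smul, hc, twist,
    mul_assoc _ ((q ^ (e + 2 * n)) ^ (_ : ℤ))]

def repGen : BGen → Module.End 𝕜 (MonomialSpace 𝕜)
  | .cs => opCs 𝕜
  | .ct => opCt 𝕜
  | .k => opK q 1
  | .kinv => opK q (-1)
  | .e => opE q s t φ
  | .f => opF q s t φ

lemma commute_opCs_repGen (b : BGen) : Commute (opCs 𝕜) (repGen q s t φ b) :=
  ext_vec fun n h i j => by
    rw [Module.End.mul_apply, Module.End.mul_apply]
    cases b <;> by_cases hn : 0 ≤ n <;> by_cases hn' : n ≤ 0 <;>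
      simp (disch := omega) [repGen, opE_vec_of_nonpos, opE_vec_of_pos, opF_vec_of_nonneg,
        opF_vec_of_neg, opCs_twist]

lemma commute_opCt_repGen (b : BGen) : Commute (opCt 𝕜) (repGen q s t φ b) :=
  ext_vec fun n h i j => by
    rw [Module.End.mul_apply, Module.End.mul_apply]
    cases b <;> by_cases hn : 0 ≤ n <;> by_cases hn' : n ≤ 0 <;>
      simp (disch := omega) [repGen, opE_vec_of_nonpos, opE_vec_of_pos, opF_vec_of_nonneg,
        opF_vec_of_neg, opCt_twist]

lemma opK_one_mul_opE (hq0 : q ≠ 0) :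
    opK q 1 * opE q s t φ = q ^ 2 • (opE q s t φ * opK q 1) :=
  ext_vec fun n h i j => by
    have hc : q ^ (-2 * (n - 1) * 1) = q ^ 2 * q ^ (-2 * n * 1) := by
      rw [← zpow_natCast, ← zpow_add₀ hq0]; ring_nf
    simp only [Module.End.mul_apply, LinearMap.smul_apply, opK_vec, map_smul, smul_smul]
    rcases le_or_gt n 0 with hn | hn
    · rw [opE_vec_of_nonpos q hn, opE_vec_of_nonpos q hn, opK_vec, hc]
    · rw [opE_vec_of_pos q s t φ hn, opE_vec_of_pos q s t φ hn, opK_twist, hc]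

lemma opK_one_mul_opF (hq0 : q ≠ 0) :
    opK q 1 * opF q s t φ = (q ^ 2)⁻¹ • (opF q s t φ * opK q 1) :=
  ext_vec fun n h i j => by
    have hc : q ^ (-2 * (n + 1) * 1) = (q ^ 2)⁻¹ * q ^ (-2 * n * 1) := by
      rw [← zpow_natCast, ← zpow_neg, ← zpow_add₀ hq0]; ring_nf
    simp only [Module.End.mul_apply, LinearMap.smul_apply, opK_vec, map_smul, smul_smul]
    rcases le_or_gt 0 n with hn | hn
    · rw [opF_vec_of_nonneg q hn, opF_vec_of_nonneg q hn, opK_vec, hc]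
    · rw [opF_vec_of_neg q s t φ hn, opF_vec_of_neg q s t φ hn, opK_twist, hc]

lemma opF_mul_opE (hq0 : q ≠ 0) :
    opF q s t φ * opE q s t φ = theta s t φ q (opCs 𝕜) (opCt 𝕜) (opK q 1) (opK q (-1)) :=
  ext_vec fun n h i j => by
    have hθ := theta_vec q s t φ hq0 (1 - 2 * n) n h i j
    rw [sub_add_cancel, zpow_one] at hθ
    rw [Module.End.mul_apply, hθ]
    rcases le_or_gt n 0 with hn | hn
    · rw [opE_vec_of_nonpos q hn, opF_vec_of_neg q s t φ (by omega)]
      congr 1 <;> ring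
    · rw [opE_vec_of_pos q s t φ hn, opF_twist q s t φ (by omega), sub_add_cancel]

lemma opE_mul_opF (hq0 : q ≠ 0) :
    opE q s t φ * opF q s t φ = theta s t φ q⁻¹ (opCs 𝕜) (opCt 𝕜) (opK q 1) (opK q (-1)) :=
  ext_vec fun n h i j => by
    have hθ := theta_vec q s t φ hq0 (-2 * n - 1) n h i j
    rw [show -2 * n - 1 + 2 * n = -1 by ring, zpow_neg_one] at hθ
    rw [Module.End.mul_apply, hθ]
    rcases le_or_gt 0 n with hn | hn
    · rw [opF_vec_of_nonneg q hn, opE_vec_of_pos q s t φ (by omega)]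
      congr 1 <;> ring
    · rw [opF_vec_of_neg q s t φ hn, opE_twist q s t φ (by omega), add_sub_cancel_right]

lemma repGen_relHolds (hq0 : q ≠ 0) : BRelHolds q s t φ (repGen q s t φ) where
  cs_comm := commute_opCs_repGen q s t φ
  ct_comm := commute_opCt_repGen q s t φ
  k_mul_kinv := by rw [repGen, repGen, ← opK_add hq0, add_neg_cancel, opK_zero]
  kinv_mul_k := by rw [repGen, repGen, ← opK_add hq0, neg_add_cancel, opK_zero]
  k_mul_e := opK_one_mul_opE q s t φ hq0
  k_mul_f := opK_one_mul_opF q s t φ hq0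
  f_mul_e := opF_mul_opE q s t φ hq0
  e_mul_f := opE_mul_opF q s t φ hq0

end Representation

section Independence

variable (s t φ)

def rep (hq0 : q ≠ 0) : BAlg q s t φ →ₐ[𝕜] Module.End 𝕜 (MonomialSpace 𝕜) :=
  (repGen_relHolds q s t φ hq0).lift

lemma opCs_pow_vec (m : ℕ) (n h : ℤ) (i j : ℕ) :
    (opCs 𝕜 ^ m) (vec n h i j) = vec n h (i + m) j := by
  induction m with
  | zero => simp
  | succ m ih => rw [pow_succ', Module.End.mul_apply, ih, opCs_vec, add_assoc]

lemma opCt_pow_vec (m : ℕ) (n h : ℤ) (i j : ℕ) :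
    (opCt 𝕜 ^ m) (vec n h i j) = vec n h i (j + m) := by
  induction m with
  | zero => simp
  | succ m ih => rw [pow_succ', Module.End.mul_apply, ih, opCt_vec, add_assoc]

variable (q) in
lemma zpow2_opF_vec (n h : ℤ) (i j : ℕ) :
    zpow2 (opF q s t φ) (opE q s t φ) n (vec 0 h i j) = vec n h i j := by
  induction n using Int.induction_on with
  | zero => simp [zpow2]
  | succ k ih =>
    rw [zpow2_add_one (by omega), Module.End.mul_apply, ih, opF_vec_of_nonneg q (by omega)]
  | pred k ih =>
    rw [zpow2_sub_one (by omega), Module.End.mul_apply, ih, opE_vec_of_nonpos q (by omega)]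

lemma rep_mono_vec (hq0 : q ≠ 0) (n h : ℤ) (i j : ℕ) :
    rep s t φ hq0 (mono q s t φ n (h, i, j)) (vec 0 0 0 0) = vec n h i j := by
  simp only [mono, map_mul, map_pow, map_zpow2, rep, BRelHolds.lift_bgen, repGen, zpow2_opK hq0,
    Module.End.mul_apply, opCt_pow_vec, opCs_pow_vec, opK_vec]
  simp [zpow2_opF_vec]

lemma linearIndependent_mono (hq0 : q ≠ 0) :
    LinearIndependent 𝕜 fun x : ℤ × ℤ × ℕ × ℕ => mono q s t φ x.1 x.2 := by
  refine LinearIndependent.of_comp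
    ((LinearMap.applyₗ (vec 0 0 0 0)).comp (rep s t φ hq0).toLinearMap) ?_
  convert (Finsupp.basisSingleOne (R := 𝕜) (ι := ℤ × ℤ × ℕ × ℕ)).linearIndependent
  ext1 ⟨n, h, i, j⟩
  simpa [vec] using rep_mono_vec s t φ hq0 n h i j

variable (q) in
lemma grade_le_span_image {n : ℤ} {S : Set ℤ} (hn : n ∈ S) :
    grade q s t φ n ≤
      Submodule.span 𝕜 ((fun x : ℤ × ℤ × ℕ × ℕ => mono q s t φ x.1 x.2) '' (Prod.fst ⁻¹' S)) :=
  Submodule.span_mono (Set.range_subset_iff.mpr fun p => ⟨(n, p), hn, rfl⟩)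

lemma iSupIndep_grade (hq0 : q ≠ 0) : iSupIndep (grade q s t φ) := fun n =>
  ((linearIndependent_mono s t φ hq0).disjoint_span_image
    ((disjoint_compl_right (a := ({n} : Set ℤ))).preimage Prod.fst)).mono
    (grade_le_span_image q s t φ (Set.mem_singleton n))
    (iSup₂_le fun _ hm => grade_le_span_image q s t φ (Set.mem_compl_singleton_iff.mpr hm))

end Independence

end BAlg

theorem stmt15_general {F : Type*} [Field F] (q : F) (hq0 : q ≠ 0)
    (s t : ℤ) (φ : LaurentPolynomial F) :
    ∃ Bn : ℤ → Submodule F (BAlg q s t φ),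
      DirectSum.IsInternal Bn ∧
      (∀ m n : ℤ, ∀ x ∈ Bn m, ∀ y ∈ Bn n, x * y ∈ Bn (m + n)) ∧
      bgen q s t φ BGen.cs ∈ Bn 0 ∧ bgen q s t φ BGen.ct ∈ Bn 0 ∧
      bgen q s t φ BGen.k ∈ Bn 0 ∧ bgen q s t φ BGen.kinv ∈ Bn 0 ∧
      bgen q s t φ BGen.f ∈ Bn 1 ∧ bgen q s t φ BGen.e ∈ Bn (-1) ∧
      ∀ n : ℤ,
        LinearIndependent F (fun p : ℤ × ℕ × ℕ =>
          zpow2 (bgen q s t φ BGen.f) (bgen q s t φ BGen.e) n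
            * zpow2 (bgen q s t φ BGen.k) (bgen q s t φ BGen.kinv) p.1
            * bgen q s t φ BGen.cs ^ p.2.1 * bgen q s t φ BGen.ct ^ p.2.2) ∧
        Bn n = Submodule.span F (Set.range (fun p : ℤ × ℕ × ℕ =>
          zpow2 (bgen q s t φ BGen.f) (bgen q s t φ BGen.e) n
            * zpow2 (bgen q s t φ BGen.k) (bgen q s t φ BGen.kinv) p.1
            * bgen q s t φ BGen.cs ^ p.2.1 * bgen q s t φ BGen.ct ^ p.2.2)) := by
  open BAlg in
  have hone := one_mem_grade_zero q s t φ
  refine ⟨grade q s t φ, ?_, fun m n x hx y hy => mul_mem_grade s t φ hq0 hx hy, ?_, ?_, ?_, ?_,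
    ?_, ?_, fun n => ⟨?_, rfl⟩⟩
  · exact DirectSum.isInternal_submodule_of_iSupIndep_of_iSup_eq_top
      (iSupIndep_grade s t φ hq0) (iSup_grade_eq_top s t φ hq0)
  · simpa using cs_mem_leftStabilizer q s t φ 0 1 hone
  · simpa using ct_mem_leftStabilizer q s t φ 0 1 hone
  · simpa using k_mem_leftStabilizer s t φ hq0 0 1 hone
  · simpa using kinv_mem_leftStabilizer s t φ hq0 0 1 hone
  · simpa using f_mul_mem_grade s t φ hq0 hone
  · simpa using e_mul_mem_grade s t φ hq0 hone
  · exact (linearIndependent_mono s t φ hq0).comp (fun p => (n, p))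
      fun _ _ h => (Prod.ext_iff.mp h).2

theorem stmt15 {F : Type*} [Field F] (q : F) (hq0 : q ≠ 0)
    (hq : ∀ n : ℕ, 0 < n → q ^ n ≠ 1) (s t : ℤ) (hst : s ≠ t)
    (φ : LaurentPolynomial F) (hφ : φ.coeff s = 0 ∧ φ.coeff t = 0) :
    ∃ Bn : ℤ → Submodule F (BAlg q s t φ),
      DirectSum.IsInternal Bn ∧
      (∀ m n : ℤ, ∀ x ∈ Bn m, ∀ y ∈ Bn n, x * y ∈ Bn (m + n)) ∧
      bgen q s t φ BGen.cs ∈ Bn 0 ∧ bgen q s t φ BGen.ct ∈ Bn 0 ∧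
      bgen q s t φ BGen.k ∈ Bn 0 ∧ bgen q s t φ BGen.kinv ∈ Bn 0 ∧
      bgen q s t φ BGen.f ∈ Bn 1 ∧ bgen q s t φ BGen.e ∈ Bn (-1) ∧
      ∀ n : ℤ,
        LinearIndependent F (fun p : ℤ × ℕ × ℕ =>
          zpow2 (bgen q s t φ BGen.f) (bgen q s t φ BGen.e) n
            * zpow2 (bgen q s t φ BGen.k) (bgen q s t φ BGen.kinv) p.1
            * bgen q s t φ BGen.cs ^ p.2.1 * bgen q s t φ BGen.ct ^ p.2.2) ∧
        Bn n = Submodule.span F (Set.range (fun p : ℤ × ℕ × ℕ =>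
          zpow2 (bgen q s t φ BGen.f) (bgen q s t φ BGen.e) n
            * zpow2 (bgen q s t φ BGen.k) (bgen q s t φ BGen.kinv) p.1
            * bgen q s t φ BGen.cs ^ p.2.1 * bgen q s t φ BGen.ct ^ p.2.2)) :=
  stmt15_general q hq0 s t φ

end
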